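/- Let (L₁, …, L_{k−1}, V_{G_k}; w₁, …, w_k) be a k-level vertex hierarchy on the weighted graph G = (V, w₁), and let s, t ∈ V be such that Anc(s) ∩ V_{G_k} = ∅ or Anc(t) ∩ V_{G_k} = ∅. Then dist_G(s,t) = ⨅_{x ∈ Anc(s) ∩ Anc(t)} ( d(s,x) + d(t,x) ), where the infimum in ℕ∞ over the empty set is ⊤. -/

import Mathlib

namespace ISLabel

variable {V : Type*}

/-- Two vertices are adjacent in the weighted graph `w` when they are distinct and
joined by an edge of finite weight. -/
def Adj (w : V → V → ℕ∞) (u v : V) : Prop := u ≠ v ∧ w u v < ⊤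

/-- `p` is a walk from `u` to `v` in the weighted graph `w`: a nonempty list of
vertices starting at `u`, ending at `v`, with consecutive vertices adjacent. -/
def IsWalk (w : V → V → ℕ∞) (u v : V) (p : List V) : Prop :=
  p ≠ [] ∧ p.head? = some u ∧ p.getLast? = some v ∧ p.Chain' (Adj w)

/-- The length of a list of vertices: the sum of `f` over consecutive pairs. -/
def pathLen (f : V → V → ℕ∞) (p : List V) : ℕ∞ :=
  ((p.zip p.tail).map fun e => f e.1 e.2).sum

/-- The distance from `u` to `v` in `w`: the infimum of the lengths of all walks
from `u` to `v` (`⊤` if there is no such walk). -/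
noncomputable def wdist (w : V → V → ℕ∞) (u v : V) : ℕ∞ :=
  ⨅ p : {p : List V // IsWalk w u v p}, pathLen w p.1

/-- `I` is an independent set in `w`. -/
def IsIndep (w : V → V → ℕ∞) (I : Set V) : Prop :=
  ∀ u ∈ I, ∀ v ∈ I, ¬ Adj w u v

/-- `w` is a weighted undirected graph: symmetric, and every off-diagonal value is
either `⊤` (no edge) or a weight `≥ 1`. -/
def IsWGraph (w : V → V → ℕ∞) : Prop :=
  (∀ u v, w u v = w v u) ∧ ∀ u v, u ≠ v → 1 ≤ w u v

/-- `w` is supported on `S`: all weights touching a vertex outside `S` are `⊤`. -/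
def SupportedOn (w : V → V → ℕ∞) (S : Set V) : Prop :=
  ∀ u v, u ∉ S ∨ v ∉ S → w u v = ⊤

/-- `VsetOf L i` is the vertex set `V_i = V ∖ (L₁ ∪ … ∪ L_{i-1})`. -/
def VsetOf (L : ℕ → Set V) (i : ℕ) : Set V := {v | ∀ j, 1 ≤ j → j < i → v ∉ L j}

/-- A `k`-level vertex hierarchy (`k ≥ 2`) on the weighted graph `w 1`: like a
vertex hierarchy of height `k`, except that the top vertex set
`V_{G_k} = VsetOf L k` is not required to be independent in `w k`. -/
structure KLevelHierarchy (V : Type*) (k : ℕ) where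
  L : ℕ → Set V
  w : ℕ → V → V → ℕ∞
  two_le : 2 ≤ k
  wgraph : ∀ i, 1 ≤ i → i ≤ k → IsWGraph (w i)
  disj : ∀ i j, 1 ≤ i → i < k → 1 ≤ j → j < k → i ≠ j → ∀ v, v ∈ L i → v ∉ L j
  supported : ∀ i, 1 ≤ i → i ≤ k → SupportedOn (w i) (VsetOf L i)
  aug : ∀ i, 2 ≤ i → i ≤ k → ∀ u v : V, u ≠ v → u ∈ VsetOf L i → v ∈ VsetOf L i →
    w i u v = min (w (i - 1) u v) (⨅ x ∈ L (i - 1), w (i - 1) u x + w (i - 1) x v)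
  indep : ∀ i, 1 ≤ i → i < k → IsIndep (w i) (L i)

/-- The level of a vertex: the unique `i < k` with `v ∈ L i`, and `k` for vertices
of the top vertex set `V_{G_k}`. -/
noncomputable def klevel {k : ℕ} (H : KLevelHierarchy V k) (v : V) : ℕ :=
  sInf {i | (1 ≤ i ∧ i < k ∧ v ∈ H.L i) ∨ i = k}

/-- One step of an ascending sequence in a `k`-level vertex hierarchy. -/
def kAscStep {k : ℕ} (H : KLevelHierarchy V k) (a b : V) : Prop :=
  klevel H a < klevel H b ∧ Adj (H.w (klevel H a)) a b

/-- `p` is an ascending sequence from `v` to `u`. -/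
def kIsAscending {k : ℕ} (H : KLevelHierarchy V k) (v u : V) (p : List V) : Prop :=
  p ≠ [] ∧ p.head? = some v ∧ p.getLast? = some u ∧ p.Chain' (kAscStep H)

/-- The set of ancestors of `v`. -/
def kAnc {k : ℕ} (H : KLevelHierarchy V k) (v : V) : Set V :=
  {u | ∃ p, kIsAscending H v u p}

/-- `d(v,u)` in a `k`-level vertex hierarchy. -/
noncomputable def kAncDist {k : ℕ} (H : KLevelHierarchy V k) (v u : V) : ℕ∞ :=
  ⨅ p : {p : List V // kIsAscending H v u p},
    pathLen (fun a b => H.w (klevel H a) a b) p.1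

/-!
An ascending step `u → x` is an edge of some `G_i`, and every edge of `G_i` is at least as
long as the distance in `G` between its ends (augmenting edges are two-edge paths one level
down). Hence `d(s,x) + d(t,x) ≥ dist_G(s,x) + dist_G(x,t) ≥ dist_G(s,t)`.

Conversely, by downward induction on `i`: any walk from `u` to `v` in `G_i` is at least as long
as `d(u,x) + d(v,x)` for some common ancestor `x`, provided `u` or `v` has no ancestor in
`V_{G_k}`. At `i = k` such a walk cannot join distinct vertices: both ends would lie in
`V_{G_k}`, and every vertex is its own ancestor. For `i < k`, if an end of the walk lies in
`L_i`, its first edge leaves the independent set `L_i`, so it is an ascending step, and we pass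
to the shorter remaining walk. Otherwise both ends survive to `V_{i+1}`, and bypassing each
interior vertex of `L_i` by an augmenting edge gives a walk in `G_{i+1}` that is no longer.
-/

section Walk

variable {w f : V → V → ℕ∞} {u v x b : V} {p l : List V}

@[simp] lemma pathLen_singleton (a : V) : pathLen f [a] = 0 := rfl

@[simp] lemma pathLen_cons_cons (a b : V) (l : List V) :
    pathLen f (a :: b :: l) = f a b + pathLen f (b :: l) := rfl

lemma pathLen_append_cons (l₁ l₂ : List V) (x : V) :
    pathLen f (l₁ ++ x :: l₂) = pathLen f (l₁ ++ [x]) + pathLen f (x :: l₂) := by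
  induction l₁ with
  | nil => simp
  | cons a l ih =>
    cases l with
    | nil => simp
    | cons b l =>
      simp only [List.cons_append, pathLen_cons_cons] at ih ⊢
      rw [ih, add_assoc]

lemma pathLen_reverse (hf : ∀ a b, f a b = f b a) : ∀ l : List V, pathLen f l.reverse = pathLen f l
  | [] => rfl
  | [_] => rfl
  | a :: b :: l => by
    rw [List.reverse_cons, List.reverse_cons, List.append_assoc, List.singleton_append,
      pathLen_append_cons, ← List.reverse_cons, pathLen_reverse hf (b :: l)]
    simp [hf b a, add_comm]

lemma not_isWalk_nil : ¬ IsWalk w u v [] := fun h => h.1 rfl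

lemma isWalk_singleton_iff {a : V} : IsWalk w u v [a] ↔ a = u ∧ a = v := by
  simp [IsWalk, List.Chain']

lemma isWalk_cons_cons_iff {a : V} :
    IsWalk w u v (a :: b :: l) ↔ a = u ∧ Adj w a b ∧ IsWalk w b v (b :: l) := by
  simp only [IsWalk, List.Chain', List.isChain_cons_cons, List.head?_cons,
    List.getLast?_cons_cons, Option.some.injEq, ne_eq, reduceCtorEq, not_false_eq_true, true_and]
  tauto

lemma isWalk_self (u : V) : IsWalk w u u [u] := isWalk_singleton_iff.2 ⟨rfl, rfl⟩

lemma IsWalk.eq_cons (h : IsWalk w u v p) : ∃ l, p = u :: l := by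
  obtain ⟨hne, hh, -⟩ := h
  obtain ⟨a, l, rfl⟩ := List.exists_cons_of_ne_nil hne
  exact ⟨l, by simpa using hh⟩

lemma IsWalk.reverse (hw : ∀ a b, w a b = w b a) (h : IsWalk w u v p) :
    IsWalk w v u p.reverse := by
  obtain ⟨hne, hh, hl, hc⟩ := h
  refine ⟨by simpa using hne, by rwa [List.head?_reverse], by rwa [List.getLast?_reverse], ?_⟩
  exact List.isChain_reverse.2 (hc.imp fun a b h => ⟨h.1.symm, hw a b ▸ h.2⟩)

lemma IsWalk.exists_adj_of_ne (h : IsWalk w u v p) (huv : u ≠ v) : ∃ b, Adj w u b := by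
  obtain ⟨l, rfl⟩ := h.eq_cons
  cases l with
  | nil => exact absurd (isWalk_singleton_iff.1 h).2 huv
  | cons b l => exact ⟨b, (isWalk_cons_cons_iff.1 h).2.1⟩

lemma wdist_le (h : IsWalk w u v p) : wdist w u v ≤ pathLen w p :=
  iInf_le (fun q : {p : List V // IsWalk w u v p} => pathLen w q.1) ⟨p, h⟩

@[simp] lemma wdist_self (u : V) : wdist w u u = 0 :=
  nonpos_iff_eq_zero.1 (wdist_le (isWalk_self u))

lemma wdist_le_weight (u v : V) : wdist w u v ≤ w u v := by
  by_cases huv : u = v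
  · simp [huv]
  by_cases htop : w u v = ⊤
  · simp [htop]
  simpa using wdist_le (isWalk_cons_cons_iff.2
    ⟨rfl, ⟨huv, lt_top_iff_ne_top.2 htop⟩, isWalk_self (w := w) v⟩)

lemma wdist_le_weight_add (h : Adj w u b) : wdist w u v ≤ w u b + wdist w b v := by
  change _ ≤ w u b + ⨅ q : {q : List V // IsWalk w b v q}, pathLen w q.1
  rw [ENat.add_iInf]
  refine le_iInf fun ⟨q, hq⟩ => ?_
  obtain ⟨l, rfl⟩ := hq.eq_cons
  exact wdist_le (isWalk_cons_cons_iff.2 ⟨rfl, h, hq⟩)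

lemma wdist_le_pathLen_add : ∀ {u : V} {p : List V}, IsWalk w u x p →
    wdist w u v ≤ pathLen w p + wdist w x v
  | _, [], h => absurd h not_isWalk_nil
  | _, [_], h => by
    obtain ⟨rfl, rfl⟩ := isWalk_singleton_iff.1 h
    simp
  | _, a :: b :: l, h => by
    obtain ⟨rfl, hab, hb⟩ := isWalk_cons_cons_iff.1 h
    calc wdist w a v ≤ w a b + wdist w b v := wdist_le_weight_add hab
      _ ≤ w a b + (pathLen w (b :: l) + wdist w x v) := by gcongr; exact wdist_le_pathLen_add hb
      _ = pathLen w (a :: b :: l) + wdist w x v := by rw [pathLen_cons_cons, add_assoc]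

lemma wdist_triangle (u x v : V) : wdist w u v ≤ wdist w u x + wdist w x v :=
  calc wdist w u v ≤ ⨅ p : {p : List V // IsWalk w u x p}, pathLen w p.1 + wdist w x v :=
        le_iInf fun p => wdist_le_pathLen_add p.2
    _ = wdist w u x + wdist w x v := ENat.iInf_add.symm

lemma wdist_comm (hw : ∀ a b, w a b = w b a) (u v : V) : wdist w u v = wdist w v u := by
  have key : ∀ a b, wdist w a b ≤ wdist w b a := fun a b =>
    le_iInf fun ⟨p, hp⟩ => (wdist_le (hp.reverse hw)).trans_eq (pathLen_reverse hw p)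
  exact (key u v).antisymm (key v u)

lemma wdist_le_pathLen_of_chain {R : V → V → Prop} (hR : ∀ a b, R a b → wdist w a b ≤ f a b) :
    ∀ {u : V} {p : List V}, p.head? = some u → p.getLast? = some v → p.IsChain R →
      wdist w u v ≤ pathLen f p
  | _, [], hh, _, _ => by simp at hh
  | u, [a], hh, hl, _ => by
    obtain rfl : a = u := Option.some.inj hh
    obtain rfl : a = v := Option.some.inj hl
    simp
  | u, a :: b :: l, hh, hl, hc => by
    obtain rfl : a = u := Option.some.inj hh
    obtain ⟨hab, hc⟩ := List.isChain_cons_cons.1 hc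
    calc wdist w a v ≤ wdist w a b + wdist w b v := wdist_triangle a b v
      _ ≤ f a b + pathLen f (b :: l) :=
        add_le_add (hR a b hab) (wdist_le_pathLen_of_chain hR rfl hl hc)

end Walk

lemma mem_VsetOf_succ_iff {L : ℕ → Set V} {i : ℕ} {v : V} (hi : 1 ≤ i) :
    v ∈ VsetOf L (i + 1) ↔ v ∈ VsetOf L i ∧ v ∉ L i := by
  refine ⟨fun h => ⟨fun j hj hji => h j hj (by omega), h i hi (by omega)⟩, ?_⟩
  rintro ⟨h, hi'⟩ j hj hji
  rcases Nat.lt_succ_iff_lt_or_eq.1 hji with hji | rfl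
  exacts [h j hj hji, hi']

section Hierarchy

variable {k : ℕ} (H : KLevelHierarchy V k) {i : ℕ} {u v x : V} {p : List V}

lemma klevel_spec (v : V) :
    klevel H v = k ∨ (1 ≤ klevel H v ∧ klevel H v < k ∧ v ∈ H.L (klevel H v)) :=
  (Nat.sInf_mem (s := {i | (1 ≤ i ∧ i < k ∧ v ∈ H.L i) ∨ i = k}) ⟨k, Or.inr rfl⟩).symm

lemma klevel_le (v : V) : klevel H v ≤ k := Nat.sInf_le (Or.inr rfl)

lemma one_le_klevel (v : V) : 1 ≤ klevel H v := by
  rcases klevel_spec H v with h | h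
  · have := H.two_le
    omega
  · exact h.1

lemma klevel_eq_of_mem (hi1 : 1 ≤ i) (hik : i < k) (hv : v ∈ H.L i) : klevel H v = i := by
  have hle : klevel H v ≤ i := Nat.sInf_le (Or.inl ⟨hi1, hik, hv⟩)
  rcases klevel_spec H v with h | ⟨h1, h2, h3⟩
  · omega
  · by_contra hne
    exact H.disj i (klevel H v) hi1 hik h1 h2 (Ne.symm hne) v hv h3

lemma mem_VsetOf_iff (hik : i ≤ k) : v ∈ VsetOf H.L i ↔ i ≤ klevel H v := by
  refine ⟨fun hv => ?_, fun h j hj1 hji hvj => ?_⟩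
  · by_contra! h
    rcases klevel_spec H v with heq | ⟨h1, -, h3⟩
    · omega
    · exact hv _ h1 h h3
  · have := klevel_eq_of_mem H hj1 (by omega) hvj
    omega

lemma w_symm (hi1 : 1 ≤ i) (hik : i ≤ k) (a b : V) : H.w i a b = H.w i b a :=
  (H.wgraph i hi1 hik).1 a b

lemma mem_VsetOf_of_adj (hi1 : 1 ≤ i) (hik : i ≤ k) (h : Adj (H.w i) u v) :
    u ∈ VsetOf H.L i ∧ v ∈ VsetOf H.L i := by
  by_contra! hmem
  exact h.2.ne (H.supported i hi1 hik u v (by tauto))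

lemma IsWalk.mem_VsetOf (hi1 : 1 ≤ i) (hik : i ≤ k) (hw : IsWalk (H.w i) u v p) (huv : u ≠ v) :
    u ∈ VsetOf H.L i ∧ v ∈ VsetOf H.L i := by
  obtain ⟨a, hua⟩ := hw.exists_adj_of_ne huv
  obtain ⟨c, hvc⟩ := (hw.reverse (w_symm H hi1 hik)).exists_adj_of_ne huv.symm
  exact ⟨(mem_VsetOf_of_adj H hi1 hik hua).1, (mem_VsetOf_of_adj H hi1 hik hvc).1⟩

lemma w_succ_le (hi1 : 1 ≤ i) (hik : i < k) (huv : u ≠ v)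
    (hu : u ∈ VsetOf H.L (i + 1)) (hv : v ∈ VsetOf H.L (i + 1)) :
    H.w (i + 1) u v ≤ H.w i u v := by
  rw [H.aug (i + 1) (by omega) hik u v huv hu hv, Nat.add_sub_cancel]
  exact min_le_left _ _

lemma w_succ_le_add (hi1 : 1 ≤ i) (hik : i < k) (huv : u ≠ v)
    (hu : u ∈ VsetOf H.L (i + 1)) (hv : v ∈ VsetOf H.L (i + 1)) (hx : x ∈ H.L i) :
    H.w (i + 1) u v ≤ H.w i u x + H.w i x v := by
  rw [H.aug (i + 1) (by omega) hik u v huv hu hv, Nat.add_sub_cancel]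
  exact (min_le_right _ _).trans (iInf₂_le x hx)

lemma wdist_one_le_w (hi1 : 1 ≤ i) (hik : i ≤ k) (u v : V) : wdist (H.w 1) u v ≤ H.w i u v := by
  induction i, hi1 using Nat.le_induction generalizing u v with
  | base => exact wdist_le_weight u v
  | succ i hi1 ih =>
    by_cases huv : u = v
    · simp [huv]
    by_cases hmem : u ∈ VsetOf H.L (i + 1) ∧ v ∈ VsetOf H.L (i + 1)
    · rw [H.aug (i + 1) (by omega) hik u v huv hmem.1 hmem.2, Nat.add_sub_cancel]
      refine le_min (ih (by omega) u v) (le_iInf₂ fun x _ => ?_)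
      exact (wdist_triangle u x v).trans (add_le_add (ih (by omega) u x) (ih (by omega) x v))
    · rw [H.supported (i + 1) (by omega) hik u v (by tauto)]
      exact le_top

lemma wdist_succ_le_pathLen (hi1 : 1 ≤ i) (hik : i < k) :
    ∀ {u : V} {p : List V}, IsWalk (H.w i) u v p →
      u ∈ VsetOf H.L (i + 1) → v ∈ VsetOf H.L (i + 1) →
      wdist (H.w (i + 1)) u v ≤ pathLen (H.w i) p
  | _, [], h, _, _ => absurd h not_isWalk_nil
  | _, [_], h, _, _ => by
    obtain ⟨rfl, rfl⟩ := isWalk_singleton_iff.1 h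
    simp
  | _, a :: b :: l, h, hu, hv => by
    obtain ⟨rfl, hab, hb⟩ := isWalk_cons_cons_iff.1 h
    have hbV := (mem_VsetOf_of_adj H hi1 hik.le hab).2
    by_cases hbL : b ∈ H.L i
    · obtain _ | ⟨c, l⟩ := l
      · obtain ⟨-, rfl⟩ := isWalk_singleton_iff.1 hb
        exact absurd hbL ((mem_VsetOf_succ_iff hi1).1 hv).2
      obtain ⟨-, hbc, hc⟩ := isWalk_cons_cons_iff.1 hb
      have hcV : c ∈ VsetOf H.L (i + 1) := (mem_VsetOf_succ_iff hi1).2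
        ⟨(mem_VsetOf_of_adj H hi1 hik.le hbc).2, fun hcL => H.indep i hi1 hik b hbL c hcL hbc⟩
      have hac : wdist (H.w (i + 1)) a c ≤ H.w i a b + H.w i b c := by
        by_cases hac : a = c
        · simp [hac]
        exact (wdist_le_weight a c).trans (w_succ_le_add H hi1 hik hac hu hcV hbL)
      calc wdist (H.w (i + 1)) a v ≤ wdist (H.w (i + 1)) a c + wdist (H.w (i + 1)) c v :=
            wdist_triangle a c v
        _ ≤ (H.w i a b + H.w i b c) + pathLen (H.w i) (c :: l) :=
            add_le_add hac (wdist_succ_le_pathLen hi1 hik hc hcV hv)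
        _ = pathLen (H.w i) (a :: b :: c :: l) := by simp [add_assoc]
    · have hbV' := (mem_VsetOf_succ_iff hi1).2 ⟨hbV, hbL⟩
      calc wdist (H.w (i + 1)) a v ≤ wdist (H.w (i + 1)) a b + wdist (H.w (i + 1)) b v :=
            wdist_triangle a b v
        _ ≤ H.w i a b + pathLen (H.w i) (b :: l) :=
            add_le_add ((wdist_le_weight a b).trans (w_succ_le H hi1 hik hab.1 hu hbV'))
              (wdist_succ_le_pathLen hi1 hik hb hbV' hv)
        _ = pathLen (H.w i) (a :: b :: l) := rfl

end Hierarchy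

section Ancestors

variable {k : ℕ} (H : KLevelHierarchy V k) {i : ℕ} {u v b x : V} {p r : List V}

lemma kAscStep_of_mem (hi1 : 1 ≤ i) (hik : i < k) (hu : u ∈ H.L i) (h : Adj (H.w i) u b) :
    kAscStep H u b := by
  have hlu := klevel_eq_of_mem H hi1 hik hu
  have hbV : b ∈ VsetOf H.L (i + 1) := (mem_VsetOf_succ_iff hi1).2
    ⟨(mem_VsetOf_of_adj H hi1 hik.le h).2, fun hbL => H.indep i hi1 hik u hu b hbL h⟩
  have hlb := (mem_VsetOf_iff H hik).1 hbV
  exact ⟨by omega, hlu ▸ h⟩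

lemma kIsAscending_self (v : V) : kIsAscending H v v [v] :=
  ⟨by simp, rfl, rfl, List.isChain_singleton _⟩

lemma kAnc_self (v : V) : v ∈ kAnc H v := ⟨[v], kIsAscending_self H v⟩

lemma kIsAscending.cons (hstep : kAscStep H u b) (h : kIsAscending H b x r) :
    kIsAscending H u x (u :: r) := by
  obtain ⟨hne, hh, hl, hc⟩ := h
  obtain ⟨a, r, rfl⟩ := List.exists_cons_of_ne_nil hne
  obtain rfl : a = b := Option.some.inj hh
  exact ⟨by simp, rfl, by rwa [List.getLast?_cons_cons], List.isChain_cons_cons.2 ⟨hstep, hc⟩⟩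

lemma kAnc_subset_of_kAscStep (hstep : kAscStep H u b) : kAnc H b ⊆ kAnc H u :=
  fun _ ⟨r, hr⟩ => ⟨u :: r, hr.cons H hstep⟩

lemma kAncDist_le (h : kIsAscending H v u p) :
    kAncDist H v u ≤ pathLen (fun a b => H.w (klevel H a) a b) p :=
  iInf_le (fun q : {p : List V // kIsAscending H v u p} =>
    pathLen (fun a b => H.w (klevel H a) a b) q.1) ⟨p, h⟩

@[simp] lemma kAncDist_self (v : V) : kAncDist H v v = 0 :=
  nonpos_iff_eq_zero.1 (kAncDist_le H (kIsAscending_self H v))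

lemma kAncDist_le_add (hstep : kAscStep H u b) :
    kAncDist H u x ≤ H.w (klevel H u) u b + kAncDist H b x := by
  change _ ≤ _ + ⨅ r : {r : List V // kIsAscending H b x r}, _
  rw [ENat.add_iInf]
  refine le_iInf fun ⟨r, hr⟩ => ?_
  obtain ⟨a, r, rfl⟩ := List.exists_cons_of_ne_nil hr.1
  obtain rfl : a = b := Option.some.inj hr.2.1
  exact kAncDist_le H (hr.cons H hstep)

lemma wdist_one_le_kAncDist (u x : V) : wdist (H.w 1) u x ≤ kAncDist H u x :=
  le_iInf fun ⟨_, hp⟩ => wdist_le_pathLen_of_chain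
    (fun a b _ => wdist_one_le_w H (one_le_klevel H a) (klevel_le H a) a b)
    hp.2.1 hp.2.2.1 hp.2.2.2

noncomputable def labelDist (u v : V) : ℕ∞ :=
  ⨅ x ∈ kAnc H u ∩ kAnc H v, (kAncDist H u x + kAncDist H v x)

lemma labelDist_comm (u v : V) : labelDist H u v = labelDist H v u := by
  simp only [labelDist, Set.inter_comm, add_comm]

@[simp] lemma labelDist_self (u : V) : labelDist H u u = 0 :=
  nonpos_iff_eq_zero.1 ((iInf₂_le u ⟨kAnc_self H u, kAnc_self H u⟩).trans (by simp))

lemma labelDist_le_add (hstep : kAscStep H u b) :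
    labelDist H u v ≤ H.w (klevel H u) u b + labelDist H b v := by
  change _ ≤ _ + ⨅ x ∈ kAnc H b ∩ kAnc H v, (kAncDist H b x + kAncDist H v x)
  rw [ENat.add_iInf₂]
  refine le_iInf₂ fun x ⟨hxb, hxv⟩ => ?_
  calc labelDist H u v ≤ kAncDist H u x + kAncDist H v x :=
        iInf₂_le x ⟨kAnc_subset_of_kAscStep H hstep hxb, hxv⟩
    _ ≤ H.w (klevel H u) u b + kAncDist H b x + kAncDist H v x := by
        gcongr; exact kAncDist_le_add H hstep
    _ = _ := add_assoc _ _ _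

end Ancestors

section Query

variable {k : ℕ} (H : KLevelHierarchy V k) {i : ℕ} {b : V} {l p : List V}

lemma kAnc_inter_top_eq_empty_of_kAscStep {u : V} (hstep : kAscStep H u b)
    (h : kAnc H u ∩ VsetOf H.L k = ∅) : kAnc H b ∩ VsetOf H.L k = ∅ :=
  Set.subset_eq_empty (Set.inter_subset_inter_left _ (kAnc_subset_of_kAscStep H hstep)) h

lemma IsWalk.eq_of_level_top {u v : V} (hw : IsWalk (H.w k) u v p)
    (hc : kAnc H u ∩ VsetOf H.L k = ∅ ∨ kAnc H v ∩ VsetOf H.L k = ∅) : u = v := by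
  by_contra huv
  obtain ⟨hu, hv⟩ := hw.mem_VsetOf H (one_le_two.trans H.two_le) le_rfl huv
  rcases hc with h | h
  · exact Set.eq_empty_iff_forall_notMem.1 h u ⟨kAnc_self H u, hu⟩
  · exact Set.eq_empty_iff_forall_notMem.1 h v ⟨kAnc_self H v, hv⟩

lemma labelDist_le_pathLen_cons {u v : V} (hi1 : 1 ≤ i) (hik : i < k) (hu : u ∈ H.L i)
    (hw : IsWalk (H.w i) u v (u :: l))
    (ih : ∀ b, kAscStep H u b → IsWalk (H.w i) b v l → labelDist H b v ≤ pathLen (H.w i) l) :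
    labelDist H u v ≤ pathLen (H.w i) (u :: l) := by
  obtain _ | ⟨b, l⟩ := l
  · obtain ⟨-, rfl⟩ := isWalk_singleton_iff.1 hw
    simp
  obtain ⟨-, hub, hb⟩ := isWalk_cons_cons_iff.1 hw
  have hstep := kAscStep_of_mem H hi1 hik hu hub
  calc labelDist H u v ≤ H.w (klevel H u) u b + labelDist H b v := labelDist_le_add H hstep
    _ ≤ H.w i u b + pathLen (H.w i) (b :: l) := by
        rw [klevel_eq_of_mem H hi1 hik hu]
        gcongr
        exact ih b hstep hb
    _ = pathLen (H.w i) (u :: b :: l) := rfl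

lemma labelDist_le_pathLen_of_succ (hi1 : 1 ≤ i) (hik : i < k)
    (ih : ∀ u v, kAnc H u ∩ VsetOf H.L k = ∅ ∨ kAnc H v ∩ VsetOf H.L k = ∅ →
      labelDist H u v ≤ wdist (H.w (i + 1)) u v)
    {u v : V} (p : List V) (hw : IsWalk (H.w i) u v p)
    (hc : kAnc H u ∩ VsetOf H.L k = ∅ ∨ kAnc H v ∩ VsetOf H.L k = ∅) :
    labelDist H u v ≤ pathLen (H.w i) p := by
  have hsym := w_symm H hi1 hik.le
  by_cases huv : u = v
  · simp [huv]
  obtain ⟨huV, hvV⟩ := hw.mem_VsetOf H hi1 hik.le huv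
  by_cases huL : u ∈ H.L i
  · obtain ⟨l, rfl⟩ := hw.eq_cons
    refine labelDist_le_pathLen_cons H hi1 hik huL hw fun b hstep hb => ?_
    exact labelDist_le_pathLen_of_succ hi1 hik ih l hb
      (hc.imp_left (kAnc_inter_top_eq_empty_of_kAscStep H hstep))
  by_cases hvL : v ∈ H.L i
  · obtain ⟨l, hl⟩ := (hw.reverse hsym).eq_cons
    have hlen : l.length < p.length := by
      have := congrArg List.length hl
      simp only [List.length_reverse, List.length_cons] at this
      omega
    rw [labelDist_comm, ← pathLen_reverse hsym, hl]
    refine labelDist_le_pathLen_cons H hi1 hik hvL (hl ▸ hw.reverse hsym) fun b hstep hb => ?_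
    exact labelDist_le_pathLen_of_succ hi1 hik ih l hb
      (hc.symm.imp_left (kAnc_inter_top_eq_empty_of_kAscStep H hstep))
  exact (ih u v hc).trans (wdist_succ_le_pathLen H hi1 hik hw
    ((mem_VsetOf_succ_iff hi1).2 ⟨huV, huL⟩) ((mem_VsetOf_succ_iff hi1).2 ⟨hvV, hvL⟩))
termination_by p.length

lemma labelDist_le_wdist (hi1 : 1 ≤ i) (hik : i ≤ k) (u v : V)
    (hc : kAnc H u ∩ VsetOf H.L k = ∅ ∨ kAnc H v ∩ VsetOf H.L k = ∅) :
    labelDist H u v ≤ wdist (H.w i) u v := by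
  induction hik using Nat.decreasingInduction generalizing u v with
  | self => exact le_iInf fun ⟨p, hp⟩ => by simp [hp.eq_of_level_top H hc]
  | of_succ i hik ih =>
    exact le_iInf fun ⟨p, hp⟩ => labelDist_le_pathLen_of_succ H hi1 hik
      (fun u v hc => ih (by omega) u v hc) p hp hc

end Query

theorem klevel_type1_query_general {k : ℕ} (H : KLevelHierarchy V k)
    (s t : V)
    (hdisj : kAnc H s ∩ VsetOf H.L k = ∅ ∨ kAnc H t ∩ VsetOf H.L k = ∅) :
    wdist (H.w 1) s t =
      ⨅ x ∈ kAnc H s ∩ kAnc H t, (kAncDist H s x + kAncDist H t x) := by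
  have hk : 1 ≤ k := one_le_two.trans H.two_le
  refine le_antisymm (le_iInf₂ fun x _ => ?_) (labelDist_le_wdist H le_rfl hk s t hdisj)
  calc wdist (H.w 1) s t ≤ wdist (H.w 1) s x + wdist (H.w 1) x t := wdist_triangle s x t
    _ = wdist (H.w 1) s x + wdist (H.w 1) t x := by rw [wdist_comm (w_symm H le_rfl hk) x t]
    _ ≤ kAncDist H s x + kAncDist H t x :=
        add_le_add (wdist_one_le_kAncDist H s x) (wdist_one_le_kAncDist H t x)

/-- Type-1 queries in a `k`-level vertex hierarchy are answered by
the labels alone. -/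
theorem klevel_type1_query [Fintype V] {k : ℕ} (H : KLevelHierarchy V k)
    (s t : V)
    (hdisj : kAnc H s ∩ VsetOf H.L k = ∅ ∨ kAnc H t ∩ VsetOf H.L k = ∅) :
    wdist (H.w 1) s t =
      ⨅ x ∈ kAnc H s ∩ kAnc H t, (kAncDist H s x + kAncDist H t x) :=
  klevel_type1_query_general H s t hdisj

end ISLabel
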